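/- For each n ≥ 1 there is a first-order formula φₙ(x) over the vocabulary {R} (R binary) that separates the classes 𝒜ₙ and ℬₙ and has size s(φₙ) = 3·2^{n+2} − 7; in particular the size of φₙ is O(2ⁿ). -/

import Mathlib

universe u v

/-- A Kripke model for a set `Φ` of proposition symbols: a set of worlds `W`,
an accessibility relation `R` and a valuation `V`. -/
structure KripkeModel (Φ : Type) : Type (u + 1) where
  W : Type u
  R : W → W → Prop
  V : Φ → W → Prop

/-- A pointed Kripke model: a Kripke model together with a distinguished world. -/
structure PointedModel (Φ : Type) : Type (u + 1) where
  M : KripkeModel.{u} Φ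
  w : M.W

/-- `n`-bisimilarity of pointed models: there are relations `Zₙ ⊆ … ⊆ Z₀` such that the
distinguished pair is in `Zₙ`, `Z₀` relates only propositionally equivalent points, and the
back-and-forth conditions hold for each `0 ≤ i ≤ n-1`. -/
def NBisim {Φ : Type} (n : ℕ) (M : KripkeModel.{u} Φ) (w : M.W)
    (N : KripkeModel.{v} Φ) (x : N.W) : Prop :=
  ∃ Z : ℕ → M.W → N.W → Prop,
    (∀ i, i < n → ∀ a b, Z (i + 1) a b → Z i a b) ∧
    Z n w x ∧
    (∀ a b, Z 0 a b → ∀ p, M.V p a ↔ N.V p b) ∧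
    (∀ i, i < n → ∀ a b, Z (i + 1) a b → ∀ c, M.R a c → ∃ d, N.R b d ∧ Z i c d) ∧
    (∀ i, i < n → ∀ a b, Z (i + 1) a b → ∀ d, N.R b d → ∃ c, M.R a c ∧ Z i c d)

/-- The class `𝒜ₙ` of all pointed frames `(A, w)` such that any two `R`-successors of `w`
are `n`-bisimilar.  Its complement is the class `ℬₙ`. -/
def classA (n : ℕ) : Set (PointedModel.{u} Empty) :=
  {P | ∀ a b : P.M.W, P.M.R P.w a → P.M.R P.w b → NBisim n P.M a P.M b}

/-- First-order formulas over the vocabulary `{R}` (with equality); variables are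
natural numbers. -/
inductive FOForm : Type where
  | rel (x y : ℕ)
  | eq (x y : ℕ)
  | not (φ : FOForm)
  | and (φ ψ : FOForm)
  | or (φ ψ : FOForm)
  | ex (x : ℕ) (φ : FOForm)
  | all (x : ℕ) (φ : FOForm)

/-- Standard first-order semantics over a frame `(W, R)` under an assignment `s`. -/
def FOSat {W : Type u} (R : W → W → Prop) (s : ℕ → W) : FOForm → Prop
  | .rel x y => R (s x) (s y)
  | .eq x y => s x = s y
  | .not φ => ¬ FOSat R s φ
  | .and φ ψ => FOSat R s φ ∧ FOSat R s ψ
  | .or φ ψ => FOSat R s φ ∨ FOSat R s ψ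
  | .ex x φ => ∃ a : W, FOSat R (Function.update s x a) φ
  | .all x φ => ∀ a : W, FOSat R (Function.update s x a) φ

/-- The size of a first-order formula: the number of its quantifiers and binary
connectives (literals have size `0` and negation does not add to the size). -/
def fosize : FOForm → ℕ
  | .rel _ _ => 0
  | .eq _ _ => 0
  | .not φ => fosize φ
  | .and φ ψ => fosize φ + fosize ψ + 1
  | .or φ ψ => fosize φ + fosize ψ + 1
  | .ex _ φ => fosize φ + 1
  | .all _ φ => fosize φ + 1

/-- A first-order formula `ψ(x)` (with free variable `x` = variable `0`) separates the
classes `A` and `B` of pointed frames if `M ⊨ ψ[w/x]` for all `(M, w) ∈ A` and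
`M ⊨ ¬ψ[w/x]` for all `(M, w) ∈ B`. -/
def FOSeparates (ψ : FOForm) (A B : Set (PointedModel.{u} Empty)) : Prop :=
  (∀ P ∈ A, ∀ s : ℕ → P.M.W, s 0 = P.w → FOSat P.M.R s ψ) ∧
  (∀ P ∈ B, ∀ s : ℕ → P.M.W, s 0 = P.w → ¬ FOSat P.M.R s ψ)

/-!
On a frame, `n`-bisimilarity is the `n`-round back-and-forth game, and each round unfolds into
first-order logic as one `∀∃` pair per direction, reusing two fresh variables per round. The
formula for round `i + 1` contains two copies of the one for round `i`, so "all successors of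
`x` are `n`-bisimilar" has size `9 · 2ⁿ - 5`; conjoining tautologies brings it to exactly
`3 · 2ⁿ⁺² - 7`.
-/

section

variable {W : Type u}

def Bisim (R : W → W → Prop) : ℕ → W → W → Prop
  | 0, _, _ => True
  | i + 1, a, b => (∀ c, R a c → ∃ d, R b d ∧ Bisim R i c d) ∧
      (∀ d, R b d → ∃ c, R a c ∧ Bisim R i c d)

theorem Bisim.of_succ {R : W → W → Prop} :
    ∀ {i : ℕ} {a b : W}, Bisim R (i + 1) a b → Bisim R i a b
  | 0, _, _, _ => trivial
  | _ + 1, _, _, ⟨forth, back⟩ =>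
    ⟨fun c hc => (forth c hc).imp fun _ ⟨hd, h⟩ => ⟨hd, h.of_succ⟩,
     fun d hd => (back d hd).imp fun _ ⟨hc, h⟩ => ⟨hc, h.of_succ⟩⟩

theorem nbisim_iff_bisim {Φ : Type} [IsEmpty Φ] {M : KripkeModel.{u} Φ} (n : ℕ) (a b : M.W) :
    NBisim n M a M b ↔ Bisim M.R n a b := by
  constructor
  · rintro ⟨Z, -, hZ, -, forth, back⟩
    suffices h : ∀ i ≤ n, ∀ x y, Z i x y → Bisim M.R i x y from h n le_rfl a b hZ
    intro i
    induction i with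
    | zero => exact fun _ _ _ _ => trivial
    | succ i ih =>
      intro hi x y hxy
      refine ⟨fun c hc => ?_, fun d hd => ?_⟩
      · obtain ⟨d, hd, h⟩ := forth i hi x y hxy c hc
        exact ⟨d, hd, ih (by omega) _ _ h⟩
      · obtain ⟨c, hc, h⟩ := back i hi x y hxy d hd
        exact ⟨c, hc, ih (by omega) _ _ h⟩
  · intro h
    exact ⟨Bisim M.R, fun _ _ _ _ => Bisim.of_succ, h, fun _ _ _ p => isEmptyElim p,
      fun _ _ _ _ hxy => hxy.1, fun _ _ _ _ hxy => hxy.2⟩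

namespace FOForm

def imp (φ ψ : FOForm) : FOForm := .or (.not φ) ψ

@[simp]
theorem fosize_imp (φ ψ : FOForm) : fosize (imp φ ψ) = fosize φ + fosize ψ + 1 := rfl

@[simp]
theorem foSat_imp (R : W → W → Prop) (s : ℕ → W) (φ ψ : FOForm) :
    FOSat R s (imp φ ψ) ↔ (FOSat R s φ → FOSat R s ψ) := by
  simp only [imp, FOSat, imp_iff_not_or]

/-- Expresses `Bisim R i` between the values of the variables `j` and `j + 1`; it quantifies
over `j + 2` and `j + 3`, which become the free variables of the formula one level down. -/
def bisim : ℕ → ℕ → FOForm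
  | 0, _ => .eq 0 0
  | i + 1, j => .and
      (.all (j + 2) (imp (.rel j (j + 2))
        (.ex (j + 3) (.and (.rel (j + 1) (j + 3)) (bisim i (j + 2))))))
      (.all (j + 3) (imp (.rel (j + 1) (j + 3))
        (.ex (j + 2) (.and (.rel j (j + 2)) (bisim i (j + 2))))))

theorem fosize_bisim : ∀ i j, fosize (bisim i j) + 9 = 9 * 2 ^ i
  | 0, _ => rfl
  | i + 1, j => by
    have := fosize_bisim i (j + 2)
    simp only [bisim, fosize, fosize_imp, pow_succ]
    omega

theorem foSat_bisim (R : W → W → Prop) :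
    ∀ i j (s : ℕ → W), FOSat R s (bisim i j) ↔ Bisim R i (s j) (s (j + 1))
  | 0, _, _ => by simp [bisim, FOSat, Bisim]
  | i + 1, j, s => by simp [bisim, FOSat, Bisim, foSat_bisim R i (j + 2)]

def successorsBisim (n : ℕ) : FOForm :=
  .all 1 (.all 2 (imp (.and (.rel 0 1) (.rel 0 2)) (bisim n 1)))

theorem fosize_successorsBisim (n : ℕ) : fosize (successorsBisim n) + 5 = 9 * 2 ^ n := by
  have := fosize_bisim n 1
  simp only [successorsBisim, fosize, fosize_imp]
  omega

theorem foSat_successorsBisim (R : W → W → Prop) (n : ℕ) (s : ℕ → W) :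
    FOSat R s (successorsBisim n) ↔ ∀ a b, R (s 0) a → R (s 0) b → Bisim R n a b := by
  simp [successorsBisim, FOSat, foSat_bisim]

def padTrue : ℕ → FOForm → FOForm
  | 0, φ => φ
  | k + 1, φ => .and (padTrue k φ) (.eq 0 0)

theorem fosize_padTrue (k : ℕ) (φ : FOForm) : fosize (padTrue k φ) = fosize φ + k := by
  induction k with
  | zero => rfl
  | succ k ih => simp only [padTrue, fosize, ih]; rfl

theorem foSat_padTrue (R : W → W → Prop) (s : ℕ → W) (k : ℕ) (φ : FOForm) :
    FOSat R s (padTrue k φ) ↔ FOSat R s φ := by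
  induction k with
  | zero => rfl
  | succ k ih => simp only [padTrue, FOSat, ih, and_true]

end FOForm

end

theorem mem_classA_iff_foSat_successorsBisim (n : ℕ) (P : PointedModel.{u} Empty)
    (s : ℕ → P.M.W) (hs : s 0 = P.w) :
    P ∈ classA n ↔ FOSat P.M.R s (FOForm.successorsBisim n) := by
  simp only [classA, Set.mem_ofPred_eq, FOForm.foSat_successorsBisim, hs, nbisim_iff_bisim]

theorem exists_fo_formula_separating_classA (n : ℕ) :
    ∃ ψ : FOForm, fosize ψ = 3 * 2 ^ (n + 2) - 7 ∧
      FOSeparates ψ (classA.{u} n) (classA.{u} n)ᶜ := by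
  refine ⟨.padTrue (3 * 2 ^ n - 2) (.successorsBisim n), ?_, ?_, ?_⟩
  · have := FOForm.fosize_successorsBisim n
    rw [FOForm.fosize_padTrue, pow_add]
    omega
  · intro P hP s hs
    rwa [FOForm.foSat_padTrue, ← mem_classA_iff_foSat_successorsBisim n P s hs]
  · intro P hP s hs
    rwa [FOForm.foSat_padTrue, ← mem_classA_iff_foSat_successorsBisim n P s hs]
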